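/- arXiv:1505.01798 — 2 statements merged into one kernel-verified Lean document; each statement's English description precedes it below -/
import Mathlib

section
/- Let d ≥ 0 and let K = (p₁, …, p_{d+3}) be a multiset of d+3 points in ℝ² whose convex hull has positive area. If σ = conv{w₁, …, w_{d+3}} and σ' = conv{w'₁, …, w'_{d+3}} are two nondegenerate (d+2)-simplices in ℝ^{d+2} with π(wᵢ) = π(w'ᵢ) = pᵢ for all i, where π : ℝ^{d+2} → ℝ² is the projection onto the first two coordinates, then for every x ∈ ℝ² not lying on any affine line through two distinct points of K, vol_d(σ ∩ π⁻¹(x)) / vol_{d+2}(σ) = vol_d(σ' ∩ π⁻¹(x)) / vol_{d+2}(σ'). In other words, the simplex spline B[K] is independent of the chosen lifted simplex. -/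
/-!
Any two lifted simplices `σ`, `σ'` differ by the affine automorphism `T` of `ℝ^{d+2}` sending
`w i` to `w' i`. Since `π ∘ T` and `π` agree on the vertices, `π ∘ T = π`, so `T` maps the fiber
`σ ∩ π⁻¹ x` onto `σ' ∩ π⁻¹ x`. On the `(d+2)`-volume `T` acts by `|det L|`, `L` its linear part;
on the `d`-volume of a fiber by `|det (L|ker π)|`. These agree because `L` induces the identity on
`ℝ^{d+2} / ker π`, so the factor cancels in the quotient.
-/

open MeasureTheory Set

noncomputable section

/-- Projection `ℝ^{m+2} → ℝ²` onto the first two coordinates. -/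
def proj (m : ℕ) (w : EuclideanSpace ℝ (Fin (m + 2))) : EuclideanSpace ℝ (Fin 2) :=
  WithLp.toLp 2 (fun i : Fin 2 => w (Fin.castLE (by omega) i))

open Module
open scoped Pointwise

theorem LinearMap.det_restrict_ker_of_comp_eq {K E F : Type*} [Field K] [AddCommGroup E]
    [Module K E] [FiniteDimensional K E] [AddCommGroup F] [Module K F]
    (π : E →ₗ[K] F) (L : E →ₗ[K] E) (hπL : π ∘ₗ L = π) (hL : ∀ v ∈ ker π, L v ∈ ker π) :
    (L.restrict hL).det = L.det := by
  have hQ : (ker π).mapQ (ker π) L hL = LinearMap.id := by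
    ext v
    simp only [coe_comp, Function.comp_apply, Submodule.mkQ_apply, Submodule.mapQ_apply, id_coe,
      id_eq, Submodule.Quotient.eq, mem_ker, map_sub, ← comp_apply, hπL, sub_self]
  rw [L.det_eq_det_mul_det (ker π) hL, hQ, det_id, mul_one]

theorem AffineBasis.exists_affineEquiv_apply_eq {ι k V P V₂ P₂ : Type*} [Ring k]
    [AddCommGroup V] [Module k V] [AddTorsor V P] [AddCommGroup V₂] [Module k V₂]
    [AddTorsor V₂ P₂] (b : AffineBasis ι k P) (b₂ : AffineBasis ι k P₂) :
    ∃ T : P ≃ᵃ[k] P₂, ∀ i, T (b i) = b₂ i := by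
  obtain ⟨i₀⟩ := b.nonempty
  let L := (b.basisOf i₀).equiv (b₂.basisOf i₀) (Equiv.refl _)
  refine ⟨((AffineEquiv.vaddConst k (b i₀)).symm.trans L.toAffineEquiv).trans
    (AffineEquiv.vaddConst k (b₂ i₀)), fun i => ?_⟩
  by_cases hi : i = i₀
  · subst hi
    simp
  · have hL := (b.basisOf i₀).equiv_apply ⟨i, hi⟩ (b₂.basisOf i₀) (Equiv.refl _)
    simp only [AffineBasis.basisOf_apply, Equiv.refl_apply] at hL
    simp [L, hL]

theorem AffineIndependent.exists_affineEquiv_apply_eq_and_comp_eq {ι k V P V₂ P₂ : Type*}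
    [Field k] [AddCommGroup V] [Module k V] [FiniteDimensional k V] [AddTorsor V P]
    [AddCommGroup V₂] [Module k V₂] [AddTorsor V₂ P₂] [Fintype ι] {w w' : ι → P}
    (hw : AffineIndependent k w) (hw' : AffineIndependent k w')
    (hcard : Fintype.card ι = finrank k V + 1) (π : P →ᵃ[k] P₂) (hπ : ∀ i, π (w i) = π (w' i)) :
    ∃ T : P ≃ᵃ[k] P, (∀ i, T (w i) = w' i) ∧ π.comp T.toAffineMap = π := by
  have hspan := hw.affineSpan_eq_top_iff_card_eq_finrank_add_one.2 hcard
  obtain ⟨T, hT⟩ := AffineBasis.exists_affineEquiv_apply_eq ⟨w, hw, hspan⟩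
    ⟨w', hw', hw'.affineSpan_eq_top_iff_card_eq_finrank_add_one.2 hcard⟩
  refine ⟨T, hT, AffineMap.ext_on hspan ?_⟩
  rintro _ ⟨i, rfl⟩
  exact (congrArg π (hT i)).trans (hπ i).symm

theorem Equiv.image_preimage_of_comp_eq {α β : Type*} (e : α ≃ α) {f : α → β} (hf : f ∘ e = f)
    (t : Set β) : e '' (f ⁻¹' t) = f ⁻¹' t := by
  conv_lhs => rw [← hf, preimage_comp]
  exact e.image_preimage _

section Scaling

variable {E : Type*} [NormedAddCommGroup E] [NormedSpace ℝ E] [MeasurableSpace E] [BorelSpace E]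
  [FiniteDimensional ℝ E]

theorem MeasureTheory.Measure.addHaar_image_affineMap (μ : Measure E) [μ.IsAddHaarMeasure]
    (T : E →ᵃ[ℝ] E) (s : Set E) :
    μ (T '' s) = ENNReal.ofReal |T.linear.det| * μ s := by
  have hT : ⇑T = (T 0 +ᵥ ·) ∘ T.linear := by
    rw [T.decomp]; ext q; simp [add_comm]
  rw [hT, image_comp, image_vadd, measure_vadd, Measure.addHaar_image_linearMap]

theorem hausdorffMeasure_image_linearMap_of_subset_submodule (V : Submodule ℝ E)
    (L : E →ₗ[ℝ] E) (hL : ∀ v ∈ V, L v ∈ V) {s : Set E} (hs : s ⊆ V) :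
    μH[finrank ℝ V] (L '' s) = ENNReal.ofReal |(L.restrict hL).det| * μH[finrank ℝ V] s := by
  have hV : Isometry V.subtype := isometry_subtype_coe
  obtain ⟨t, rfl⟩ : ∃ t : Set V, V.subtype '' t = s :=
    ⟨_, image_preimage_eq_of_subset (by simpa using hs)⟩
  have hLV : ⇑L ∘ V.subtype = V.subtype ∘ L.restrict hL :=
    funext fun v => (L.coe_restrict_apply hL v).symm
  have hd : (0 : ℝ) ≤ finrank ℝ V := Nat.cast_nonneg _
  rw [← image_comp, hLV, image_comp, hV.hausdorffMeasure_image (.inl hd),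
    hV.hausdorffMeasure_image (.inl hd), Measure.addHaar_image_linearMap]

theorem hausdorffMeasure_image_affineMap_of_sub_mem (V : Submodule ℝ E) (T : E →ᵃ[ℝ] E)
    (hT : ∀ v ∈ V, T.linear v ∈ V) {s : Set E} (hs : ∀ p ∈ s, ∀ q ∈ s, p - q ∈ V) :
    μH[finrank ℝ V] (T '' s) =
      ENNReal.ofReal |(T.linear.restrict hT).det| * μH[finrank ℝ V] s := by
  rcases s.eq_empty_or_nonempty with rfl | ⟨y, hy⟩
  · simp
  have hTs : T '' s = T y +ᵥ T.linear '' (-y +ᵥ s) := by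
    rw [← image_vadd, ← image_vadd, ← image_comp, ← image_comp]
    refine image_congr fun q _ => ?_
    simp only [Function.comp_apply, vadd_eq_add, neg_add_eq_sub]
    rw [← vsub_eq_sub q, T.linearMap_vsub, vsub_eq_sub, add_sub_cancel]
  have hsV : -y +ᵥ s ⊆ (V : Set E) := by
    rintro _ ⟨q, hq, rfl⟩
    simpa [neg_add_eq_sub] using hs q hq y hy
  rw [hTs, hausdorffMeasure_vadd _ (.inl (Nat.cast_nonneg _)),
    hausdorffMeasure_image_linearMap_of_subset_submodule V _ hT hsV,
    hausdorffMeasure_vadd _ (.inl (Nat.cast_nonneg _))]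

theorem hausdorffMeasure_image_affineMap_of_subset_fiber {F : Type*} [AddCommGroup F]
    [Module ℝ F] (π : E →ₗ[ℝ] F) (T : E →ᵃ[ℝ] E) (hπT : π ∘ₗ T.linear = π) {s : Set E} {x : F}
    (hs : s ⊆ π ⁻¹' {x}) :
    μH[finrank ℝ (LinearMap.ker π)] (T '' s) =
      ENNReal.ofReal |T.linear.det| * μH[finrank ℝ (LinearMap.ker π)] s := by
  have hT : ∀ v ∈ LinearMap.ker π, T.linear v ∈ LinearMap.ker π := fun v hv => by
    rwa [LinearMap.mem_ker, ← LinearMap.comp_apply, hπT]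
  rw [hausdorffMeasure_image_affineMap_of_sub_mem _ T hT, π.det_restrict_ker_of_comp_eq _ hπT]
  intro a ha b hb
  rw [LinearMap.mem_ker, map_sub, sub_eq_zero]
  exact (hs ha).trans (hs hb).symm

end Scaling

def projₗ (m : ℕ) : EuclideanSpace ℝ (Fin (m + 2)) →ₗ[ℝ] EuclideanSpace ℝ (Fin 2) where
  toFun := proj m
  map_add' _ _ := rfl
  map_smul' _ _ := rfl

theorem proj_surjective (m : ℕ) : Function.Surjective (proj m) := fun y =>
  ⟨WithLp.toLp 2 fun j => if h : (j : ℕ) < 2 then y ⟨j, h⟩ else 0, by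
    ext i; fin_cases i <;> simp [proj]⟩

theorem finrank_ker_projₗ (m : ℕ) : finrank ℝ (LinearMap.ker (projₗ m)) = m := by
  have h := (projₗ m).finrank_range_add_finrank_ker
  rw [LinearMap.range_eq_top.2 (proj_surjective m), finrank_top] at h
  simp only [finrank_euclideanSpace_fin] at h
  omega

theorem simplex_spline_well_defined_general (d : ℕ)
    (p : Fin (d + 3) → EuclideanSpace ℝ (Fin 2))
    (w w' : Fin (d + 3) → EuclideanSpace ℝ (Fin (d + 2)))
    (hw : AffineIndependent ℝ w) (hw' : AffineIndependent ℝ w')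
    (hp : ∀ i, proj d (w i) = p i) (hp' : ∀ i, proj d (w' i) = p i)
    (x : EuclideanSpace ℝ (Fin 2)) :
    (μH[(d : ℝ)] (convexHull ℝ (Set.range w) ∩ proj d ⁻¹' {x})).toReal /
        (μH[(d : ℝ) + 2] (convexHull ℝ (Set.range w))).toReal =
      (μH[(d : ℝ)] (convexHull ℝ (Set.range w') ∩ proj d ⁻¹' {x})).toReal /
        (μH[(d : ℝ) + 2] (convexHull ℝ (Set.range w'))).toReal := by
  obtain ⟨T, hTw, hπT⟩ := hw.exists_affineEquiv_apply_eq_and_comp_eq hw' (by simp)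
    (projₗ d).toAffineMap fun i => (hp i).trans (hp' i).symm
  set σ := convexHull ℝ (range w)
  have hσ : T '' σ = convexHull ℝ (range w') := by
    rw [← AffineEquiv.coe_toAffineMap, AffineMap.image_convexHull, ← range_comp]
    exact congrArg _ (congrArg _ (funext hTw))
  have hfiber : T '' (proj d ⁻¹' {x}) = proj d ⁻¹' {x} :=
    T.toEquiv.image_preimage_of_comp_eq (f := proj d) (congrArg DFunLike.coe hπT) _
  have hσx : T '' (σ ∩ proj d ⁻¹' {x}) = convexHull ℝ (range w') ∩ proj d ⁻¹' {x} := by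
    rw [image_inter T.injective, hσ, hfiber]
  have hnum := hausdorffMeasure_image_affineMap_of_subset_fiber (projₗ d) T.toAffineMap
    (congrArg AffineMap.linear hπT) (inter_subset_right : σ ∩ proj d ⁻¹' {x} ⊆ _)
  rw [finrank_ker_projₗ, AffineEquiv.coe_toAffineMap] at hnum
  have hden := Measure.addHaar_image_affineMap μH[finrank ℝ (EuclideanSpace ℝ (Fin (d + 2)))]
    T.toAffineMap σ
  rw [finrank_euclideanSpace_fin, Nat.cast_add, Nat.cast_two, AffineEquiv.coe_toAffineMap] at hden
  have hdet : (ENNReal.ofReal |T.toAffineMap.linear.det|).toReal ≠ 0 := by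
    rw [ENNReal.toReal_ofReal (abs_nonneg _)]
    exact abs_ne_zero.2 (LinearEquiv.isUnit_det' T.linear).ne_zero
  rw [← hσx, ← hσ, hnum, hden, ENNReal.toReal_mul, ENNReal.toReal_mul, mul_div_mul_left _ _ hdet]

/-- **Independence of the simplex spline from the chosen lifted simplex.**
Let `d ≥ 0` and let `K = (p 1, …, p (d+3))` be a multiset of `d+3` points in `ℝ²` whose convex
hull has positive area.  If `σ = conv {w 1, …, w (d+3)}` and `σ' = conv {w' 1, …, w' (d+3)}` are
two nondegenerate `(d+2)`-simplices in `ℝ^{d+2}` projecting onto the knots `p i` under the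
projection `π` onto the first two coordinates, then for every `x ∈ ℝ²` not lying on any affine
line through two distinct points of `K`, the value
`vol_d (σ ∩ π⁻¹ x) / vol_{d+2} σ` is the same for `σ` and `σ'`. -/
theorem simplex_spline_well_defined (d : ℕ)
    (p : Fin (d + 3) → EuclideanSpace ℝ (Fin 2))
    (hK : 0 < volume (convexHull ℝ (Set.range p)))
    (w w' : Fin (d + 3) → EuclideanSpace ℝ (Fin (d + 2)))
    (hw : AffineIndependent ℝ w) (hw' : AffineIndependent ℝ w')
    (hp : ∀ i, proj d (w i) = p i) (hp' : ∀ i, proj d (w' i) = p i)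
    (x : EuclideanSpace ℝ (Fin 2))
    (hx : ∀ i j : Fin (d + 3), p i ≠ p j →
      x ∉ (affineSpan ℝ ({p i, p j} : Set (EuclideanSpace ℝ (Fin 2))) : Set _)) :
    (μH[(d : ℝ)] (convexHull ℝ (Set.range w) ∩ proj d ⁻¹' {x})).toReal /
        (μH[(d : ℝ) + 2] (convexHull ℝ (Set.range w))).toReal =
      (μH[(d : ℝ)] (convexHull ℝ (Set.range w') ∩ proj d ⁻¹' {x})).toReal /
        (μH[(d : ℝ) + 2] (convexHull ℝ (Set.range w'))).toReal :=
  simplex_spline_well_defined_general d p w w' hw hw' hp hp' x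
end
end

section
/- Let K be a multiset of at least 3 points of ℝ² whose convex hull has positive area. Then the area-normalized simplex spline Q[K] is nonnegative everywhere on ℝ², and Q[K](x) > 0 for every x in the interior of conv(K). -/
/-!
Nonnegativity, together with the vanishing of `Q K` outside `conv K`, follows by induction on `K`
from the recurrence, with convex weights for points of the hull and arbitrary affine weights
outside it.

Positivity cannot be obtained by deleting knots alone: the centre of a square lies on the boundary
of all four triangles spanned by its vertices. Subtracting two affine representations of `x` over
`e ::ₘ K` gives knot insertion, `Q K x = ∑ₚ γₚ Q (e ::ₘ K.erase p) x` for affine weights `γ` of a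
new knot `e`, and these weights can be taken positive when `e` is interior to `conv K`. For
interior `x`, pick knots `r, s` not collinear with `x` and a new knot `e` just beyond `x` as seen
from the midpoint of `r s`, so that `x` is interior to the triangle `e r s`. Replacing a knot by
`e` and then deleting another one, while keeping a copy each of `r` and `s`, costs only positive
factors and leads to a smaller multiset whose hull still has `x` in its interior.
-/

open MeasureTheory Set

noncomputable section

/-- The underlying set of points of a multiset of knots in `ℝ²`. -/
def knotSet (K : Multiset (ℝ × ℝ)) : Set (ℝ × ℝ) := {x | x ∈ K}

/-- `IsQFamily A Q` says that `Q` is a family of area-normalized simplex splines,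
normalized by the area `A` (the area of the reference triangle `Δ`):
* `Q K = 0` whenever `conv K` has zero area;
* if `conv K` has positive area and `|K| = 3`, then `Q K` is `A / area (conv K)` times the
  indicator function of a half-open version `H` of the convex hull of `K`
  (a set squeezed between the interior and the closure of `conv K`);
* if `conv K` has positive area and `|K| > 3`, then `Q K x = ∑ⱼ βⱼ * Q (K ∖ {pⱼ}) x` for every
  barycentric representation `x = ∑ⱼ βⱼ pⱼ`, `∑ⱼ βⱼ = 1`, in terms of the distinct points `pⱼ`
  of `K`. -/
def IsQFamily (A : ℝ) (Q : Multiset (ℝ × ℝ) → (ℝ × ℝ) → ℝ) : Prop :=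
  (∀ K : Multiset (ℝ × ℝ), volume (convexHull ℝ (knotSet K)) = 0 → ∀ x, Q K x = 0) ∧
  (∀ K : Multiset (ℝ × ℝ), Multiset.card K = 3 →
    0 < volume (convexHull ℝ (knotSet K)) →
    ∃ H : Set (ℝ × ℝ), interior (convexHull ℝ (knotSet K)) ⊆ H ∧
      H ⊆ convexHull ℝ (knotSet K) ∧
      ∀ x, Q K x = (A / (volume (convexHull ℝ (knotSet K))).toReal) * H.indicator 1 x) ∧
  (∀ K : Multiset (ℝ × ℝ), 3 < Multiset.card K →
    0 < volume (convexHull ℝ (knotSet K)) →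
    ∀ x : ℝ × ℝ, ∀ β : (ℝ × ℝ) → ℝ,
      (∑ p ∈ K.toFinset, β p) = 1 → (∑ p ∈ K.toFinset, β p • p) = x →
      Q K x = ∑ p ∈ K.toFinset, β p * Q (K.erase p) x)

open Filter Topology AffineMap

theorem knotSet_eq_coe_toFinset (K : Multiset (ℝ × ℝ)) : knotSet K = ↑K.toFinset := by
  ext x; simp [knotSet]

theorem knotSet_cons (e : ℝ × ℝ) (K : Multiset (ℝ × ℝ)) :
    knotSet (e ::ₘ K) = insert e (knotSet K) := by
  ext x; simp [knotSet]

theorem knotSet_mono {K L : Multiset (ℝ × ℝ)} (h : K ≤ L) : knotSet K ⊆ knotSet L :=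
  fun _ hx => Multiset.mem_of_le h hx

theorem knotSet_finite (K : Multiset (ℝ × ℝ)) : (knotSet K).Finite := by
  rw [knotSet_eq_coe_toFinset]; exact Finset.finite_toSet _

theorem exists_eq_cons_cons_cons_cons {α : Type*} {K : Multiset α} {r s : α} (hrs : r ≠ s)
    (hr : r ∈ K) (hs : s ∈ K) (hK : 4 ≤ Multiset.card K) :
    ∃ p q R, K = p ::ₘ q ::ₘ r ::ₘ s ::ₘ R := by
  obtain ⟨K₁, rfl⟩ := Multiset.exists_cons_of_mem hr
  obtain ⟨K₂, rfl⟩ :=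
    Multiset.exists_cons_of_mem ((Multiset.mem_cons.mp hs).resolve_left hrs.symm)
  obtain ⟨n, hn⟩ : ∃ n, Multiset.card K₂ = n + 1 + 1 := ⟨Multiset.card K₂ - 2, by simp at hK; omega⟩
  obtain ⟨p, K₃, rfl, hK₃⟩ := Multiset.card_eq_succ_iff.mp hn
  obtain ⟨q, R, rfl, -⟩ := Multiset.card_eq_succ_iff.mp hK₃
  exact ⟨p, q, R, by simp only [Multiset.cons_swap]⟩

theorem collinear_of_subset_affineSpan {k V P : Type*} [DivisionRing k] [AddCommGroup V]
    [Module k V] [AddTorsor V P] {s t : Set P} (hst : s ⊆ affineSpan k t) (ht : Collinear k t) :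
    Collinear k s := by
  refine (Submodule.rank_mono ?_).trans ht
  simpa only [direction_affineSpan] using AffineSubspace.direction_le (affineSpan_le.mpr hst)

theorem exists_not_collinear_insert_pair {k V P : Type*} [DivisionRing k] [AddCommGroup V]
    [Module k V] [AddTorsor V P] {S : Set P} (hS : ¬ Collinear k S) (x : P) :
    ∃ r ∈ S, ∃ s ∈ S, ¬ Collinear k {x, r, s} := by
  by_contra! h
  obtain ⟨r, hr, hrx⟩ : ∃ r ∈ S, r ≠ x := by
    by_contra! h'
    exact hS ((collinear_singleton k x).subset h')
  refine hS (collinear_of_subset_affineSpan (fun s hs => ?_) (collinear_pair k x r))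
  exact (h r hr s hs).mem_affineSpan_of_mem_of_ne (by simp) (by simp) (by simp) hrx.symm

section NormedSpace

variable {E : Type*} [NormedAddCommGroup E] [NormedSpace ℝ E]

theorem Collinear.affineSpan_ne_top [FiniteDimensional ℝ E] (hE : 1 < Module.finrank ℝ E)
    {s : Set E} (h : Collinear ℝ s) : affineSpan ℝ s ≠ ⊤ := by
  intro htop
  have := (collinear_iff_finrank_le_one (k := ℝ)).mp h
  rw [← direction_affineSpan, htop, AffineSubspace.direction_top, finrank_top] at this
  omega

theorem affineSpan_eq_top_of_measure_convexHull_pos [MeasurableSpace E] [BorelSpace E]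
    [FiniteDimensional ℝ E] {μ : Measure E} [μ.IsAddHaarMeasure] {s : Set E}
    (h : 0 < μ (convexHull ℝ s)) : affineSpan ℝ s = ⊤ := by
  by_contra hs
  exact h.ne' (measure_mono_null (convexHull_subset_affineSpan s)
    (Measure.addHaar_affineSubspace μ _ hs))

theorem exists_weights_of_affineSpan_eq_top {s : Finset E} (hs : affineSpan ℝ (s : Set E) = ⊤)
    (x : E) : ∃ w : E → ℝ, ∑ p ∈ s, w p = 1 ∧ ∑ p ∈ s, w p • p = x := by
  have hx : x ∈ affineSpan ℝ (id '' (s : Set E)) := by simp [hs]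
  obtain ⟨t, w, hts, hw, rfl⟩ := eq_affineCombination_of_mem_affineSpan_image hx
  have hts : t ⊆ s := Finset.coe_subset.mp hts
  have hw' : ∑ p ∈ s, (t : Set E).indicator w p = 1 := by
    rwa [Finset.sum_indicator_subset w hts]
  refine ⟨(t : Set E).indicator w, hw', ?_⟩
  rw [Finset.affineCombination_indicator_subset w id hts,
    Finset.affineCombination_eq_linear_combination _ _ _ hw']
  rfl

theorem exists_mem_openSegment_of_mem_nhds {x c : E} {U F : Set E} (hU : U ∈ 𝓝 x)
    (hF : F.Finite) (hcx : c ≠ x) : ∃ y ∈ U, y ∉ F ∧ x ∈ openSegment ℝ c y := by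
  have hU' : ∀ᶠ t in 𝓝[>] (1 : ℝ), lineMap c x t ∈ U := by
    refine (lineMap_continuous.tendsto' 1 x ?_).mono_left nhdsWithin_le_nhds hU
    exact lineMap_apply_one c x
  have hF' : ∀ᶠ t in 𝓝[>] (1 : ℝ), lineMap c x t ∉ F :=
    (nhdsWithin_mono _ (fun t (ht : 1 < t) => ht.ne') |>.trans (nhdsNE_le_cofinite 1))
      ((hF.preimage (lineMap_injective ℝ hcx).injOn).eventually_cofinite_notMem)
  obtain ⟨t, ⟨htU, htF⟩, ht⟩ := ((hU'.and hF').and self_mem_nhdsWithin).exists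
  refine ⟨lineMap c x t, htU, htF, ?_⟩
  rw [openSegment_eq_image_lineMap]
  refine ⟨t⁻¹, ⟨by positivity, inv_lt_one_of_one_lt₀ ht⟩, ?_⟩
  rw [lineMap_lineMap_right, inv_mul_cancel₀ (by positivity), lineMap_apply_one]

theorem exists_pos_weights_of_mem_interior_convexHull {s : Finset E} {x : E}
    (hx : x ∈ interior (convexHull ℝ (s : Set E))) :
    ∃ w : E → ℝ, (∀ p ∈ s, 0 < w p) ∧ ∑ p ∈ s, w p = 1 ∧ ∑ p ∈ s, w p • p = x := by
  have hs : s.Nonempty := by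
    by_contra h
    simp [Finset.not_nonempty_iff_eq_empty.mp h] at hx
  set c : E := ∑ p ∈ s, (s.card : ℝ)⁻¹ • p
  have hsum : ∑ p ∈ s, (s.card : ℝ)⁻¹ = 1 := by
    rw [Finset.sum_const, nsmul_eq_mul, mul_inv_cancel₀ (by simp [hs.ne_empty])]
  have hpos : ∀ p ∈ s, (0 : ℝ) < (s.card : ℝ)⁻¹ := fun _ _ => by positivity
  obtain rfl | hcx := eq_or_ne c x
  · exact ⟨_, hpos, hsum, rfl⟩
  obtain ⟨y, hy, -, a, b, ha, hb, hab, rfl⟩ :=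
    exists_mem_openSegment_of_mem_nhds (mem_interior_iff_mem_nhds.mp hx) finite_empty hcx
  obtain ⟨v, hv0, hv1, rfl⟩ := Finset.mem_convexHull'.mp hy
  refine ⟨fun p => a * (s.card : ℝ)⁻¹ + b * v p, fun p hp => ?_, ?_, ?_⟩
  · have := hv0 p hp
    positivity
  · rw [Finset.sum_add_distrib, ← Finset.mul_sum, ← Finset.mul_sum, hsum, hv1, mul_one, mul_one,
      hab]
  · simp [add_smul, mul_smul, Finset.sum_add_distrib, ← Finset.smul_sum, c]

theorem exists_mem_interior_convexHull_triple (hE : Module.finrank ℝ E = 2) {x r s : E}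
    (hxrs : ¬ Collinear ℝ {x, r, s}) {U F : Set E} (hU : U ∈ 𝓝 x) (hF : F.Finite) :
    ∃ e ∈ U, e ∉ F ∧ x ∈ interior (convexHull ℝ {e, r, s}) := by
  have hm : midpoint ℝ r s ∈ line[ℝ, r, s] :=
    (AffineSubspace.convex _).midpoint_mem (left_mem_affineSpan_pair ℝ r s)
      (right_mem_affineSpan_pair ℝ r s)
  have hmx : midpoint ℝ r s ≠ x := fun h =>
    hxrs (collinear_insert_of_mem_affineSpan_pair (h ▸ hm))
  obtain ⟨e, heU, heF, a, b, ha, hb, hab, hx⟩ := exists_mem_openSegment_of_mem_nhds hU hF hmx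
  refine ⟨e, heU, heF, ?_⟩
  have hind : AffineIndependent ℝ ![e, r, s] := by
    rw [affineIndependent_iff_not_collinear_set]
    intro hcol
    have he : e ∈ line[ℝ, r, s] := hcol.mem_affineSpan_of_mem_of_ne (by simp) (by simp) (by simp)
      (ne₂₃_of_not_collinear hxrs)
    refine hxrs (collinear_insert_of_mem_affineSpan_pair ?_)
    rw [← hx]
    exact (AffineSubspace.convex _) hm he ha.le hb.le hab
  have htop : affineSpan ℝ (range ![e, r, s]) = ⊤ := by
    have : FiniteDimensional ℝ E := Module.finite_of_finrank_eq_succ hE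
    rw [hind.affineSpan_eq_top_iff_card_eq_finrank_add_one, hE, Fintype.card_fin]
  obtain ⟨T, hT⟩ : ∃ T : AffineBasis (Fin 3) ℝ E, ⇑T = ![e, r, s] := ⟨⟨_, hind, htop⟩, rfl⟩
  have hvert : e = T 0 ∧ r = T 1 ∧ s = T 2 := by simp [hT]
  have hrange : range T = {e, r, s} := by
    rw [hT, Matrix.range_cons, Matrix.range_cons_cons_empty, singleton_union]
  rw [← hrange, T.interior_convexHull]
  -- `x = a • midpoint ℝ r s + b • e` has barycentric coordinates `(b, a / 2, a / 2)`.
  intro i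
  rw [← hx, Convex.combo_affine_apply hab, AffineMap.map_midpoint, hvert.1, hvert.2.1, hvert.2.2]
  fin_cases i <;> simp [midpoint_eq_smul_add, ha, hb]

end NormedSpace

namespace IsQFamily

variable {A : ℝ} {Q : Multiset (ℝ × ℝ) → (ℝ × ℝ) → ℝ}

theorem nonneg_and_eq_zero_of_notMem (hQ : IsQFamily A Q) (hA : 0 ≤ A) {K : Multiset (ℝ × ℝ)}
    (hK : 3 ≤ Multiset.card K) :
    (∀ x, 0 ≤ Q K x) ∧ ∀ x ∉ convexHull ℝ (knotSet K), Q K x = 0 := by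
  induction K using Multiset.strongInductionOn with
  | ih K ih =>
  by_cases hvol : volume (convexHull ℝ (knotSet K)) = 0
  · exact ⟨fun x => (hQ.1 K hvol x).ge, fun x _ => hQ.1 K hvol x⟩
  have hpos := pos_iff_ne_zero.mpr hvol
  rcases hK.eq_or_lt with hK3 | hK3
  · obtain ⟨H, -, hH, hQH⟩ := hQ.2.1 K hK3.symm hpos
    refine ⟨fun x => ?_, fun x hx => ?_⟩
    · rw [hQH]
      exact mul_nonneg (div_nonneg hA ENNReal.toReal_nonneg)
        (indicator_nonneg (fun _ _ => zero_le_one) x)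
    · rw [hQH, indicator_of_notMem (fun h => hx (hH h)), mul_zero]
  have ih' (p) (hp : p ∈ K.toFinset) := ih (K.erase p) (Multiset.erase_lt.mpr
    (Multiset.mem_toFinset.mp hp)) (by
      have := Multiset.card_erase_add_one (Multiset.mem_toFinset.mp hp); omega)
  have hzero : ∀ x ∉ convexHull ℝ (knotSet K), Q K x = 0 := by
    intro x hx
    have hspan := affineSpan_eq_top_of_measure_convexHull_pos hpos
    rw [knotSet_eq_coe_toFinset] at hspan
    obtain ⟨β, hβ, hβx⟩ := exists_weights_of_affineSpan_eq_top hspan x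
    rw [hQ.2.2 K hK3 hpos x β hβ hβx]
    refine Finset.sum_eq_zero fun p hp => ?_
    rw [(ih' p hp).2 x fun h => hx (convexHull_mono (knotSet_mono (K.erase_le p)) h), mul_zero]
  refine ⟨fun x => ?_, hzero⟩
  by_cases hx : x ∈ convexHull ℝ (knotSet K)
  · rw [knotSet_eq_coe_toFinset] at hx
    obtain ⟨w, hw0, hw, hwx⟩ := Finset.mem_convexHull'.mp hx
    rw [hQ.2.2 K hK3 hpos x w hw hwx]
    exact Finset.sum_nonneg fun p hp => mul_nonneg (hw0 p hp) ((ih' p hp).1 x)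
  · exact (hzero x hx).ge

theorem nonneg (hQ : IsQFamily A Q) (hA : 0 ≤ A) {K : Multiset (ℝ × ℝ)}
    (hK : 3 ≤ Multiset.card K) (x : ℝ × ℝ) : 0 ≤ Q K x :=
  (hQ.nonneg_and_eq_zero_of_notMem hA hK).1 x

theorem sum_mul_erase_eq_zero (hQ : IsQFamily A Q) {K : Multiset (ℝ × ℝ)}
    (hK : 3 < Multiset.card K) (hpos : 0 < volume (convexHull ℝ (knotSet K))) {δ : ℝ × ℝ → ℝ}
    (hδ : ∑ p ∈ K.toFinset, δ p = 0) (hδp : ∑ p ∈ K.toFinset, δ p • p = 0) (x : ℝ × ℝ) :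
    ∑ p ∈ K.toFinset, δ p * Q (K.erase p) x = 0 := by
  have hspan := affineSpan_eq_top_of_measure_convexHull_pos hpos
  rw [knotSet_eq_coe_toFinset] at hspan
  obtain ⟨β, hβ, hβx⟩ := exists_weights_of_affineSpan_eq_top hspan x
  have h₁ := hQ.2.2 K hK hpos x β hβ hβx
  have h₂ := hQ.2.2 K hK hpos x (β + δ) (by simp [Finset.sum_add_distrib, hβ, hδ])
    (by simp [add_smul, Finset.sum_add_distrib, hβx, hδp])
  simp only [Pi.add_apply, add_mul, Finset.sum_add_distrib] at h₂
  linarith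

theorem eq_sum_mul_cons_erase (hQ : IsQFamily A Q) {K : Multiset (ℝ × ℝ)} {e : ℝ × ℝ}
    (hK : 3 ≤ Multiset.card K) (he : e ∉ K)
    (hpos : 0 < volume (convexHull ℝ (knotSet (e ::ₘ K)))) {γ : ℝ × ℝ → ℝ}
    (hγ : ∑ p ∈ K.toFinset, γ p = 1) (hγe : ∑ p ∈ K.toFinset, γ p • p = e) (x : ℝ × ℝ) :
    Q K x = ∑ p ∈ K.toFinset, γ p * Q (e ::ₘ K.erase p) x := by
  have heK : e ∉ K.toFinset := by simpa using he
  set δ : ℝ × ℝ → ℝ := fun p => if p = e then 1 else -γ p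
  have hδe : δ e = 1 := if_pos rfl
  have hδK : ∀ p ∈ K.toFinset, δ p = -γ p := fun p hp => if_neg (ne_of_mem_of_not_mem hp heK)
  have key := hQ.sum_mul_erase_eq_zero (by simp; omega) hpos (δ := δ) ?_ ?_ x
  · rw [Multiset.toFinset_cons, Finset.sum_insert heK, hδe, Multiset.erase_cons_head,
      Finset.sum_congr rfl fun p hp => by
        rw [hδK p hp, Multiset.erase_cons_tail _ (ne_of_mem_of_not_mem hp heK).symm]] at key
    simp only [neg_mul, Finset.sum_neg_distrib, one_mul] at key
    linarith
  · rw [Multiset.toFinset_cons, Finset.sum_insert heK, hδe, Finset.sum_congr rfl hδK,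
      Finset.sum_neg_distrib, hγ, add_neg_cancel]
  · rw [Multiset.toFinset_cons, Finset.sum_insert heK, hδe,
      Finset.sum_congr rfl fun p hp => by rw [hδK p hp]]
    simp [neg_smul, Finset.sum_neg_distrib, hγe]

theorem pos_of_card_eq_three (hQ : IsQFamily A Q) (hA : 0 < A) {K : Multiset (ℝ × ℝ)}
    (hK : Multiset.card K = 3) {x : ℝ × ℝ} (hx : x ∈ interior (convexHull ℝ (knotSet K))) :
    0 < Q K x := by
  have hpos : 0 < volume (convexHull ℝ (knotSet K)) :=
    Measure.measure_pos_of_nonempty_interior _ ⟨x, hx⟩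
  have hfin : volume (convexHull ℝ (knotSet K)) ≠ ⊤ :=
    (knotSet_finite K).isCompact_convexHull (𝕜 := ℝ) |>.measure_lt_top.ne
  obtain ⟨H, hH, -, hQH⟩ := hQ.2.1 K hK hpos
  rw [hQH, indicator_of_mem (hH hx), Pi.one_apply, mul_one]
  exact div_pos hA (ENNReal.toReal_pos hpos.ne' hfin)

theorem pos_cons_of_pos (hQ : IsQFamily A Q) (hA : 0 ≤ A) {L : Multiset (ℝ × ℝ)}
    (hL : 3 ≤ Multiset.card L) {q x : ℝ × ℝ}
    (hx : x ∈ interior (convexHull ℝ (knotSet (q ::ₘ L)))) (h : 0 < Q L x) :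
    0 < Q (q ::ₘ L) x := by
  have hpos := Measure.measure_pos_of_nonempty_interior volume ⟨x, hx⟩
  rw [knotSet_eq_coe_toFinset] at hx
  obtain ⟨w, hw0, hw, hwx⟩ := exists_pos_weights_of_mem_interior_convexHull hx
  rw [hQ.2.2 _ (by simp; omega) hpos x w hw hwx]
  refine Finset.sum_pos' (fun p hp => mul_nonneg (hw0 p hp).le (hQ.nonneg hA ?_ x))
    ⟨q, by simp, ?_⟩
  · have := Multiset.card_erase_add_one (Multiset.mem_toFinset.mp hp)
    simp only [Multiset.card_cons] at this
    omega
  · rw [Multiset.erase_cons_head]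
    exact mul_pos (hw0 q (by simp)) h

theorem pos_cons_of_pos_cons (hQ : IsQFamily A Q) (hA : 0 ≤ A) {L : Multiset (ℝ × ℝ)}
    (hL : 2 ≤ Multiset.card L) {p e x : ℝ × ℝ} (he : e ∉ knotSet (p ::ₘ L))
    (heK : e ∈ interior (convexHull ℝ (knotSet (p ::ₘ L)))) (h : 0 < Q (e ::ₘ L) x) :
    0 < Q (p ::ₘ L) x := by
  have hpos : 0 < volume (convexHull ℝ (knotSet (e ::ₘ p ::ₘ L))) := by
    refine Measure.measure_pos_of_nonempty_interior volume ⟨e, interior_mono ?_ heK⟩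
    exact convexHull_mono (knotSet_mono (Multiset.le_cons_self _ e))
  rw [knotSet_eq_coe_toFinset] at heK
  obtain ⟨γ, hγ0, hγ, hγe⟩ := exists_pos_weights_of_mem_interior_convexHull heK
  rw [hQ.eq_sum_mul_cons_erase (by simp; omega) he hpos hγ hγe]
  refine Finset.sum_pos' (fun q hq => mul_nonneg (hγ0 q hq).le (hQ.nonneg hA ?_ x))
    ⟨p, by simp, ?_⟩
  · have := Multiset.card_erase_add_one (Multiset.mem_toFinset.mp hq)
    simp only [Multiset.card_cons] at this ⊢
    omega
  · rw [Multiset.erase_cons_head]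
    exact mul_pos (hγ0 p (by simp)) h

theorem pos_of_mem_interior (hQ : IsQFamily A Q) (hA : 0 < A) {K : Multiset (ℝ × ℝ)}
    (hK : 3 ≤ Multiset.card K) {x : ℝ × ℝ} (hx : x ∈ interior (convexHull ℝ (knotSet K))) :
    0 < Q K x := by
  induction hn : Multiset.card K using Nat.strong_induction_on generalizing K with
  | _ n ih =>
  rcases hK.eq_or_lt with hK3 | hK3
  · exact hQ.pos_of_card_eq_three hA hK3.symm hx
  have hspan := interior_convexHull_nonempty_iff_affineSpan_eq_top.mp ⟨x, hx⟩
  obtain ⟨r, hr, s, hs, hxrs⟩ := exists_not_collinear_insert_pair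
    (fun h => h.affineSpan_ne_top (by simp) hspan) x
  obtain ⟨e, heI, he, hxe⟩ := exists_mem_interior_convexHull_triple (by simp) hxrs
    (isOpen_interior.mem_nhds hx) (knotSet_finite K)
  obtain ⟨p, q, R, rfl⟩ := exists_eq_cons_cons_cons_cons (ne₂₃_of_not_collinear hxrs) hr hs hK3
  have hx' : x ∈ interior (convexHull ℝ (knotSet (e ::ₘ r ::ₘ s ::ₘ R))) := by
    refine interior_mono (convexHull_mono ?_) hxe
    simp [knotSet_cons, insert_subset_iff]
  have h₁ := ih _ (by simp at hn ⊢; omega) (by simp) hx' rfl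
  have h₂ := hQ.pos_cons_of_pos (q := q) hA.le (by simp)
    (interior_mono (convexHull_mono (knotSet_mono (Multiset.le_cons_self _ q))) hx') h₁
  rw [Multiset.cons_swap] at h₂
  exact hQ.pos_cons_of_pos_cons hA.le (by simp) he heI h₂

end IsQFamily

theorem qspline_nonneg_pos_general (v : Fin 3 → ℝ × ℝ) (hv : AffineIndependent ℝ v)
    (Q : Multiset (ℝ × ℝ) → (ℝ × ℝ) → ℝ)
    (hQ : IsQFamily ((volume (convexHull ℝ (Set.range v))).toReal) Q)
    (K : Multiset (ℝ × ℝ)) (hK : 3 ≤ Multiset.card K) :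
    (∀ x : ℝ × ℝ, 0 ≤ Q K x) ∧
      ∀ x ∈ interior (convexHull ℝ (knotSet K)), 0 < Q K x := by
  have hspan : affineSpan ℝ (range v) = ⊤ :=
    hv.affineSpan_eq_top_iff_card_eq_finrank_add_one.mpr (by simp)
  have hA : 0 < (volume (convexHull ℝ (Set.range v))).toReal :=
    ENNReal.toReal_pos (Measure.measure_pos_of_nonempty_interior _
      (interior_convexHull_nonempty_iff_affineSpan_eq_top.mpr hspan)).ne'
      ((finite_range v).isCompact_convexHull (𝕜 := ℝ)).measure_lt_top.ne
  exact ⟨hQ.nonneg hA.le hK, fun x hx => hQ.pos_of_mem_interior hA hK hx⟩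

/-- **Nonnegativity and positivity of the area-normalized simplex spline.**
Let `Δ` be a nondegenerate triangle (with vertices `v 0, v 1, v 2`) and let `Q` be the family
of area-normalized simplex splines for `Δ`.  Let `K` be a multiset of at least 3 points of
`ℝ²` whose convex hull has positive area.  Then `Q K` is nonnegative everywhere on `ℝ²` and
strictly positive on the interior of the convex hull of `K`. -/
theorem qspline_nonneg_pos (v : Fin 3 → ℝ × ℝ) (hv : AffineIndependent ℝ v)
    (Q : Multiset (ℝ × ℝ) → (ℝ × ℝ) → ℝ)
    (hQ : IsQFamily ((volume (convexHull ℝ (Set.range v))).toReal) Q)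
    (K : Multiset (ℝ × ℝ)) (hK : 3 ≤ Multiset.card K)
    (harea : 0 < volume (convexHull ℝ (knotSet K))) :
    (∀ x : ℝ × ℝ, 0 ≤ Q K x) ∧
      ∀ x ∈ interior (convexHull ℝ (knotSet K)), 0 < Q K x :=
  qspline_nonneg_pos_general v hv Q hQ K hK
end
end
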